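/- Perturbation along the Lasso solution path (active-set line lemma): Suppose θ̂ satisfies the Lasso KKT conditions at penalty λ₀ > 0 with active set S = {i : θ̂_i ≠ 0}, and suppose |G_i(θ̂)| < λ₀ strictly for all i ∉ S, where G_i(θ) = (1/n)⟨y - Xθ, X_i⟩. Let Γ̂_S = (1/n)X_SᵀX_S be invertible, q_S = (sign(θ̂_i))_{i∈S}, and define θ' by θ'_S = -Γ̂_S^{-1}q_S and θ'_i = 0 for i ∉ S. Then there exists δ₀ > 0 such that for all |δ| < δ₀, the point θ̂ + δθ' satisfies the Lasso KKT conditions at penalty λ₀ + δ, and in particular is a Lasso solution for penalty λ₀ + δ. -/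

import Mathlib

/-!
Along the line `θ̂ + δ θ'` the correlations move affinely, `G(θ̂ + δ θ') = G(θ̂) - δ Γ̂ θ'`, and on the
active set `-(Γ̂ θ')_i = sign θ̂_i`, which is exactly what the penalty change `λ₀ ↦ λ₀ + δ` requires.
For small `|δ|` the active coordinates keep their signs and the strict inactive inequalities
`|G_i| < λ₀` survive, so the KKT conditions persist. They imply optimality by convexity: the
least-squares loss dominates its linearization at `θ`, and `G_i(θ)` is a subgradient of `λ |·|`
at `θ_i`.
-/

open Matrix Finset Filter Topology

/-- `g` is a subgradient of `t ↦ lam * |t|` at `a`. -/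
def IsSubgradientAbs (lam a g : ℝ) : Prop :=
  (a ≠ 0 → g = Real.sign a * lam) ∧ (a = 0 → |g| ≤ lam)

theorem IsSubgradientAbs.mul_sub_le {lam a g : ℝ} (h : IsSubgradientAbs lam a g)
    (hlam : 0 ≤ lam) (b : ℝ) : g * (b - a) ≤ lam * (|b| - |a|) := by
  rcases lt_trichotomy a 0 with ha | rfl | ha
  · rw [h.1 ha.ne, Real.sign_of_neg ha, abs_of_neg ha]
    nlinarith [neg_abs_le b]
  · calc g * (b - 0) ≤ |g| * |b| := by rw [sub_zero, ← abs_mul]; exact le_abs_self _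
      _ ≤ lam * (|b| - |0|) := by rw [abs_zero, sub_zero]; gcongr; exact h.2 rfl
  · rw [h.1 ha.ne', Real.sign_of_pos ha, abs_of_pos ha]
    nlinarith [le_abs_self b]

theorem Real.eventually_sign_eq {a : ℝ} (ha : a ≠ 0) :
    ∀ᶠ t in 𝓝 a, Real.sign t = Real.sign a := by
  rcases ha.lt_or_gt with ha | ha
  · filter_upwards [eventually_lt_nhds ha] with t ht
    rw [Real.sign_of_neg ht, Real.sign_of_neg ha]
  · filter_upwards [eventually_gt_nhds ha] with t ht
    rw [Real.sign_of_pos ht, Real.sign_of_pos ha]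

theorem eventually_isSubgradientAbs_add_mul {lam a g v c : ℝ}
    (hact : a ≠ 0 → g = Real.sign a * lam ∧ c = -Real.sign a)
    (hinact : a = 0 → |g| < lam ∧ v = 0) :
    ∀ᶠ δ in 𝓝 0, IsSubgradientAbs (lam + δ) (a + δ * v) (g - δ * c) := by
  by_cases ha : a = 0
  · obtain ⟨hg, rfl⟩ := hinact ha
    have hlt : ∀ᶠ δ in 𝓝 (0 : ℝ), |g - δ * c| < lam + δ :=
      ContinuousAt.eventually_lt (by fun_prop) (by fun_prop) (by simpa using hg)
    filter_upwards [hlt] with δ hδ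
    exact ⟨fun h => absurd (by simp [ha]) h, fun _ => hδ.le⟩
  · obtain ⟨rfl, rfl⟩ := hact ha
    have hline : Tendsto (fun δ : ℝ => a + δ * v) (𝓝 0) (𝓝 a) := by
      have : Continuous fun δ : ℝ => a + δ * v := by fun_prop
      simpa using this.tendsto 0
    filter_upwards [hline.eventually (Real.eventually_sign_eq ha)] with δ hδ
    refine ⟨fun _ => by rw [hδ]; ring, fun h => ?_⟩
    rw [h, Real.sign_zero] at hδ
    rcases Real.sign_apply_eq_of_ne_zero a ha with hs | hs <;> norm_num [hs] at hδ

noncomputable section Lasso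

variable {n d : ℕ} (X : Matrix (Fin n) (Fin d) ℝ) (y : Fin n → ℝ)

def lassoObjective (lam : ℝ) (θ : Fin d → ℝ) : ℝ :=
  (1 / (2 * n)) * ∑ k, (y k - (X *ᵥ θ) k) ^ 2 + lam * ∑ i, |θ i|

def lassoGrad (θ : Fin d → ℝ) : Fin d → ℝ :=
  (1 / (n : ℝ)) • (Xᵀ *ᵥ (y - X *ᵥ θ))

def empiricalGram : Matrix (Fin d) (Fin d) ℝ :=
  (1 / (n : ℝ)) • (Xᵀ * X)

theorem lassoGrad_apply (θ : Fin d → ℝ) (i : Fin d) :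
    lassoGrad X y θ i = 1 / (n : ℝ) * ((y - X *ᵥ θ) ⬝ᵥ fun k => X k i) := by
  simp [lassoGrad, mulVec, dotProduct_comm]

theorem empiricalGram_mulVec_apply (v : Fin d → ℝ) (i : Fin d) :
    (empiricalGram X *ᵥ v) i
      = ∑ j, (1 / (n : ℝ) * ((fun k => X k i) ⬝ᵥ fun k => X k j)) * v j := by
  simp [empiricalGram, mulVec, dotProduct, mul_apply, mul_sum]

theorem lassoGrad_add_smul (θ v : Fin d → ℝ) (δ : ℝ) :
    lassoGrad X y (θ + δ • v) = lassoGrad X y θ - δ • (empiricalGram X *ᵥ v) := by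
  simp only [lassoGrad, empiricalGram, mulVec_add, mulVec_smul, sub_add_eq_sub_sub, mulVec_sub,
    mulVec_mulVec, smul_mulVec, smul_sub]
  rw [smul_comm]

theorem sum_sq_sub_mulVec_eq (θs θ : Fin d → ℝ) :
    (1 / (2 * n)) * ∑ k, (y k - (X *ᵥ θ) k) ^ 2
      = (1 / (2 * n)) * ∑ k, (y k - (X *ᵥ θs) k) ^ 2 - lassoGrad X y θs ⬝ᵥ (θ - θs)
        + (1 / (2 * n)) * ∑ k, ((X *ᵥ (θ - θs)) k) ^ 2 := by
  have hcross : lassoGrad X y θs ⬝ᵥ (θ - θs)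
      = 1 / (n : ℝ) * ∑ k, (y - X *ᵥ θs) k * (X *ᵥ (θ - θs)) k := by
    rw [lassoGrad, smul_dotProduct, mulVec_transpose, ← dotProduct_mulVec, smul_eq_mul]
    rfl
  rw [hcross]
  simp only [mulVec_sub, Pi.sub_apply]
  simp only [mul_sum, ← sum_sub_distrib, ← sum_add_distrib]
  refine sum_congr rfl fun k _ => ?_
  ring

theorem lassoObjective_le_of_isSubgradientAbs {lam : ℝ} (hlam : 0 ≤ lam) {θs : Fin d → ℝ}
    (hkkt : ∀ i, IsSubgradientAbs lam (θs i) (lassoGrad X y θs i)) (θ : Fin d → ℝ) :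
    lassoObjective X y lam θs ≤ lassoObjective X y lam θ := by
  have hlin : lassoGrad X y θs ⬝ᵥ (θ - θs) ≤ lam * ∑ i, |θ i| - lam * ∑ i, |θs i| := by
    rw [← mul_sub, ← sum_sub_distrib, mul_sum]
    exact sum_le_sum fun i _ => (hkkt i).mul_sub_le hlam (θ i)
  have hquad : 0 ≤ (1 / (2 * n : ℝ)) * ∑ k, ((X *ᵥ (θ - θs)) k) ^ 2 := by positivity
  rw [lassoObjective, lassoObjective, sum_sq_sub_mulVec_eq X y θs θ]
  linarith

theorem eventually_isSubgradientAbs_lassoGrad_add_smul {lam : ℝ} (hlam : 0 < lam)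
    {θ v : Fin d → ℝ}
    (hact : ∀ i, θ i ≠ 0 → lassoGrad X y θ i = Real.sign (θ i) * lam)
    (hinact : ∀ i, θ i = 0 → |lassoGrad X y θ i| < lam)
    (hv : ∀ i, θ i = 0 → v i = 0)
    (hGv : ∀ i, θ i ≠ 0 → (empiricalGram X *ᵥ v) i = -Real.sign (θ i)) :
    ∀ᶠ δ in 𝓝 0, 0 ≤ lam + δ ∧
      ∀ i, IsSubgradientAbs (lam + δ) ((θ + δ • v) i) (lassoGrad X y (θ + δ • v) i) := by
  have hpos : ∀ᶠ δ in 𝓝 (0 : ℝ), 0 < lam + δ :=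
    ContinuousAt.eventually_lt (by fun_prop) (by fun_prop) (by simpa using hlam)
  have hcoord := fun i => eventually_isSubgradientAbs_add_mul (lam := lam)
    (fun h => ⟨hact i h, hGv i h⟩) (fun h => ⟨hinact i h, hv i h⟩)
  filter_upwards [hpos, eventually_all.2 hcoord] with δ hδ hδi
  refine ⟨hδ.le, fun i => ?_⟩
  simpa [lassoGrad_add_smul] using hδi i

end Lasso

theorem stmt6_general {n d : ℕ} (X : Matrix (Fin n) (Fin d) ℝ) (y : Fin n → ℝ)
    (lam0 : ℝ) (hlam0 : 0 < lam0) (θhat θ' : Fin d → ℝ)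
    (G : (Fin d → ℝ) → Fin d → ℝ)
    (hG : ∀ θ i, G θ i = (1/(n:ℝ)) * ((y - X.mulVec θ) ⬝ᵥ fun k => X k i))
    (hkkt1 : ∀ i, θhat i ≠ 0 → G θhat i = Real.sign (θhat i) * lam0)
    (hkkt2 : ∀ i, θhat i = 0 → |G θhat i| < lam0)
    (hθ'0 : ∀ i, θhat i = 0 → θ' i = 0)
    (hθ'eq : ∀ i, θhat i ≠ 0 →
      ∑ j, ((1/(n:ℝ)) * ((fun k => X k i) ⬝ᵥ fun k => X k j)) * θ' j
        = - Real.sign (θhat i)) :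
    ∃ δ₀ > (0:ℝ), ∀ δ : ℝ, |δ| < δ₀ →
      ((∀ i, ((θhat + δ • θ') i ≠ 0 →
          G (θhat + δ • θ') i = Real.sign ((θhat + δ • θ') i) * (lam0 + δ))
        ∧ ((θhat + δ • θ') i = 0 → |G (θhat + δ • θ') i| ≤ lam0 + δ))
      ∧ (∀ θ, (1/(2*n)) * ∑ k, (y k - X.mulVec (θhat + δ • θ') k)^2
            + (lam0 + δ) * ∑ i, |(θhat + δ • θ') i|
          ≤ (1/(2*n)) * ∑ k, (y k - X.mulVec θ k)^2 + (lam0 + δ) * ∑ i, |θ i|)) := by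
  obtain rfl : G = lassoGrad X y :=
    funext fun θ => funext fun i => (hG θ i).trans (lassoGrad_apply X y θ i).symm
  have hθ'eq' : ∀ i, θhat i ≠ 0 → (empiricalGram X *ᵥ θ') i = -Real.sign (θhat i) :=
    fun i hi => (empiricalGram_mulVec_apply X θ' i).trans (hθ'eq i hi)
  obtain ⟨δ₀, hδ₀, hline⟩ := Metric.eventually_nhds_iff.1
    (eventually_isSubgradientAbs_lassoGrad_add_smul X y hlam0 hkkt1 hkkt2 hθ'0 hθ'eq')
  refine ⟨δ₀, hδ₀, fun δ hδ => ?_⟩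
  obtain ⟨hlam, hkkt⟩ := hline (by simpa using hδ)
  exact ⟨hkkt, lassoObjective_le_of_isSubgradientAbs X y hlam hkkt⟩

/-- Active-set line lemma: perturbing a Lasso solution along the direction
`θ'_S = -Γ̂_S⁻¹ q_S` (zero off the active set) yields Lasso solutions for nearby
penalties `λ₀ + δ`. -/
theorem stmt6 {n d : ℕ} (hn : 0 < n) (X : Matrix (Fin n) (Fin d) ℝ) (y : Fin n → ℝ)
    (lam0 : ℝ) (hlam0 : 0 < lam0) (θhat θ' : Fin d → ℝ)
    (G : (Fin d → ℝ) → Fin d → ℝ)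
    (hG : ∀ θ i, G θ i = (1/(n:ℝ)) * ((y - X.mulVec θ) ⬝ᵥ fun k => X k i))
    (hkkt1 : ∀ i, θhat i ≠ 0 → G θhat i = Real.sign (θhat i) * lam0)
    (hkkt2 : ∀ i, θhat i = 0 → |G θhat i| < lam0)
    (hθ'0 : ∀ i, θhat i = 0 → θ' i = 0)
    (hθ'eq : ∀ i, θhat i ≠ 0 →
      ∑ j, ((1/(n:ℝ)) * ((fun k => X k i) ⬝ᵥ fun k => X k j)) * θ' j
        = - Real.sign (θhat i)) :
    ∃ δ₀ > (0:ℝ), ∀ δ : ℝ, |δ| < δ₀ →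
      ((∀ i, ((θhat + δ • θ') i ≠ 0 →
          G (θhat + δ • θ') i = Real.sign ((θhat + δ • θ') i) * (lam0 + δ))
        ∧ ((θhat + δ • θ') i = 0 → |G (θhat + δ • θ') i| ≤ lam0 + δ))
      ∧ (∀ θ, (1/(2*n)) * ∑ k, (y k - X.mulVec (θhat + δ • θ') k)^2
            + (lam0 + δ) * ∑ i, |(θhat + δ • θ') i|
          ≤ (1/(2*n)) * ∑ k, (y k - X.mulVec θ k)^2 + (lam0 + δ) * ∑ i, |θ i|)) :=
  stmt6_general X y lam0 hlam0 θhat θ' G hG hkkt1 hkkt2 hθ'0 hθ'eq
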